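/- There exist absolute constants M and K, not depending on the subordinator X, such that for all t > 0 and δ > 0, E[N(t,δ)²] ≤ M·t²/U(δ)² + K; in particular Var(N(t,δ)) ≤ M·t²/U(δ)² + K. -/

import Mathlib

open MeasureTheory ProbabilityTheory Filter Topology Real Set

/-- A subordinator: a non-decreasing right-continuous Lévy process started at 0,
with drift `d`, Lévy measure `ν` and Laplace exponent
`Φ(λ) = dλ + ∫ (1 - e^{-λy}) ν(dy)`. -/
structure IsSubordinator {Ω : Type*} [MeasurableSpace Ω] (P : Measure Ω)
    (X : ℝ → Ω → ℝ) (d : ℝ) (ν : Measure ℝ) : Prop where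
  isProb : IsProbabilityMeasure P
  meas : ∀ t : ℝ, Measurable (X t)
  start : ∀ ω, X 0 ω = 0
  mono : ∀ ω, Monotone fun t => X t ω
  rightCont : ∀ ω t, ContinuousWithinAt (fun s => X s ω) (Set.Ici t) t
  drift_nonneg : 0 ≤ d
  levy_integrable : ∫⁻ y in Set.Ioi (0:ℝ), ENNReal.ofReal (min 1 y) ∂ν ≠ ⊤
  laplace : ∀ l : ℝ, 0 < l → ∀ t : ℝ, 0 ≤ t →
      ∫ ω, Real.exp (-l * X t ω) ∂P
        = Real.exp (-t * (d * l + ∫ y in Set.Ioi (0:ℝ), (1 - Real.exp (-l * y)) ∂ν))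
  indep_incr : ∀ t : ℕ → ℝ, Monotone t → 0 ≤ t 0 →
      iIndepFun (fun i ω => X (t (i+1)) ω - X (t i) ω) P
  stat_incr : ∀ s t : ℝ, 0 ≤ s → 0 ≤ t →
      IdentDistrib (fun ω => X (s + t) ω - X s ω) (X t) P P

/-- The successive passage times `T_n(δ)`: `T_0 = 0` and
`T_{n+1} = inf {t ≥ T_n : X_t - X_{T_n} > δ}`. -/
noncomputable def passage {Ω : Type*} (X : ℝ → Ω → ℝ) (δ : ℝ) : ℕ → Ω → ℝ
  | 0 => fun _ => 0
  | n + 1 => fun ω =>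
      sInf {t : ℝ | passage X δ n ω ≤ t ∧ δ < X t ω - X (passage X δ n ω) ω}

/-- `N(t,δ)`: the minimal number of intervals of length at most `δ` needed to
cover the range `{X_s : s ≤ t}`, realised through the passage times. -/
noncomputable def coverN {Ω : Type*} (X : ℝ → Ω → ℝ) (t δ : ℝ) (ω : Ω) : ℕ :=
  sSup {k : ℕ | passage X δ k ω ≤ t}

/-- The potential function `U(δ) = ∫₀^∞ P(X_t ≤ δ) dt`. -/
noncomputable def potU {Ω : Type*} [MeasurableSpace Ω] (P : Measure Ω)
    (X : ℝ → Ω → ℝ) (δ : ℝ) : ℝ :=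
  ∫ t in Set.Ioi (0:ℝ), (P {ω | X t ω ≤ δ}).toReal

/-- The `q`-potential `U_q(δ) = ∫₀^∞ e^{-qt} P(X_t ≤ δ) dt`. -/
noncomputable def potUq {Ω : Type*} [MeasurableSpace Ω] (P : Measure Ω)
    (X : ℝ → Ω → ℝ) (q δ : ℝ) : ℝ :=
  ∫ t in Set.Ioi (0:ℝ), Real.exp (-q * t) * (P {ω | X t ω ≤ δ}).toReal

/-!
Write `Φ` for the Laplace exponent at `δ⁻¹`, cut `[0, t]` into `n` cells of length `t / n` and let
`Wₙ` be the sum over the cells of `min(1, δ⁻¹ · increment)`. Consecutive passage times are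
separated by rises of size `δ`, so as soon as the mesh is finer than every gap between the passage
times before `t`, `N(t, δ) ≤ 1 + 2 Wₙ`. The summands of `Wₙ` are independent, bounded by `1`, and
have mean at most `2 (t / n) Φ` because `min(1, x) ≤ 2 (1 - e^{-x})`; hence
`E[(1 + 2 Wₙ)²] ≤ 1 + 8 A + 4 A²` with `A = 2 t Φ`, and Fatou's lemma passes this on to `N(t, δ)²`.
Finally the Chernoff bound `P(X_s ≤ δ) ≤ e · e^{-sΦ}` gives `U(δ) ≤ e / Φ`, so `A ≤ 6 t / U(δ)`.
-/

open scoped ENNReal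

theorem min_one_add_le {p q : ℝ} (hp : 0 ≤ p) (hq : 0 ≤ q) :
    min 1 (p + q) ≤ min 1 p + min 1 q := by
  simp only [min_def]
  split_ifs <;> linarith

theorem exp_neg_one_le_half : exp (-1) ≤ 1 / 2 := by
  rw [exp_neg, inv_eq_one_div]
  gcongr
  linarith [add_one_le_exp 1]

theorem min_one_le_two_mul_one_sub_exp_neg {x : ℝ} (hx : 0 ≤ x) :
    min 1 x ≤ 2 * (1 - exp (-x)) := by
  rcases le_total x 1 with hx1 | hx1
  · -- the chord of the convex function `exp` between `0` and `-1`
    have hchord := convexOn_exp.2 (mem_univ 0) (mem_univ (-1)) (sub_nonneg.2 hx1) hx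
      (sub_add_cancel 1 x)
    simp only [smul_eq_mul, mul_zero, zero_add, mul_neg, mul_one, exp_zero] at hchord
    rw [min_eq_right hx1]
    nlinarith [exp_neg_one_le_half]
  · rw [min_eq_left hx1]
    have : exp (-x) ≤ exp (-1) := exp_le_exp.2 (neg_le_neg hx1)
    linarith [exp_neg_one_le_half]

theorem min_one_sub_le_sum_Ico {u : ℕ → ℝ} (hu : Monotone u) {a b : ℕ} (hab : a ≤ b) :
    min 1 (u b - u a) ≤ ∑ j ∈ Finset.Ico a b, min 1 (u (j + 1) - u j) := by
  induction b, hab using Nat.le_induction with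
  | base => simp
  | succ b hab ih =>
    rw [Finset.sum_Ico_succ_top hab]
    calc min 1 (u (b + 1) - u a)
        = min 1 ((u b - u a) + (u (b + 1) - u b)) := by ring_nf
      _ ≤ min 1 (u b - u a) + min 1 (u (b + 1) - u b) :=
        min_one_add_le (sub_nonneg.2 (hu hab)) (sub_nonneg.2 (hu b.le_succ))
      _ ≤ _ := by gcongr

theorem sum_min_one_sub_le_sum_Ico {u : ℕ → ℝ} (hu : Monotone u) {c : ℕ → ℕ}
    (hc : Monotone c) (m : ℕ) :
    ∑ i ∈ Finset.range m, min 1 (u (c (i + 1)) - u (c i))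
      ≤ ∑ j ∈ Finset.Ico (c 0) (c m), min 1 (u (j + 1) - u j) := by
  induction m with
  | zero => simp
  | succ m ih =>
    rw [Finset.sum_range_succ, ← Finset.sum_Ico_consecutive _ (hc (Nat.zero_le m))
      (hc m.le_succ)]
    exact add_le_add ih (min_one_sub_le_sum_Ico hu (hc m.le_succ))

/-- The grid cells containing `T (2i)` and `T (2i+2)` enclose `[T (2i), T (2i+1)]`, across which
`f` rises by `δ`. -/
theorem half_le_sum_min_one_grid {f : ℝ → ℝ} (hf : Monotone f) {T : ℕ → ℝ} (hT : Monotone T)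
    (hT0 : 0 ≤ T 0) {δ h : ℝ} (hδ : 0 < δ) (hh : 0 < h) {k n : ℕ}
    (hgap : ∀ i < k, h < T (i + 1) - T i) (hjump : ∀ i < k, f (T i) + δ ≤ f (T (i + 1)))
    (hTk : T k ≤ n * h) :
    ((k / 2 : ℕ) : ℝ) ≤ ∑ j ∈ Finset.range n, min 1 (δ⁻¹ * (f (↑(j + 1) * h) - f (↑j * h))) := by
  set c : ℕ → ℕ := fun i => ⌊T i / h⌋₊
  have hc_le : ∀ i, c i * h ≤ T i := fun i =>
    (le_div_iff₀ hh).1 (Nat.floor_le (div_nonneg (hT0.trans (hT i.zero_le)) hh.le))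
  have hlt_c : ∀ i, T i < (c i + 1) * h := fun i => (div_lt_iff₀ hh).1 (Nat.lt_floor_add_one _)
  have hc : Monotone c := fun i j hij => Nat.floor_le_floor (by gcongr; exact hT hij)
  set u : ℕ → ℝ := fun j => δ⁻¹ * f (j * h)
  have hu : Monotone u := fun i j hij => by
    have : f (i * h) ≤ f (j * h) := hf (by gcongr)
    simp only [u]
    gcongr
  have hblock : ∀ i < k / 2, 1 ≤ u (c (2 * i + 2)) - u (c (2 * i)) := by
    intro i hi
    have hpass : T (2 * i + 1) ≤ c (2 * i + 2) * h := by
      linarith [hgap (2 * i + 1) (by omega), hlt_c (2 * i + 2)]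
    have hrise : δ ≤ f (c (2 * i + 2) * h) - f (c (2 * i) * h) := by
      linarith [hjump (2 * i) (by omega), hf hpass, hf (hc_le (2 * i))]
    rw [← mul_sub, le_inv_mul_iff₀ hδ, mul_one]
    exact hrise
  have hcn : c (2 * (k / 2)) ≤ n := by
    have : (c (2 * (k / 2)) : ℝ) * h ≤ n * h :=
      (hc_le _).trans ((hT (by omega : 2 * (k / 2) ≤ k)).trans hTk)
    exact_mod_cast le_of_mul_le_mul_right this hh
  calc ((k / 2 : ℕ) : ℝ) = ∑ i ∈ Finset.range (k / 2), 1 := by simp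
    _ ≤ ∑ i ∈ Finset.range (k / 2), min 1 (u (c (2 * (i + 1))) - u (c (2 * i))) := by
      refine Finset.sum_le_sum fun i hi => le_min le_rfl ?_
      exact hblock i (Finset.mem_range.1 hi)
    _ ≤ ∑ j ∈ Finset.Ico (c 0) (c (2 * (k / 2))), min 1 (u (j + 1) - u j) :=
      sum_min_one_sub_le_sum_Ico hu (fun i j hij => hc (by omega)) (k / 2)
    _ ≤ ∑ j ∈ Finset.range n, min 1 (u (j + 1) - u j) := by
      refine Finset.sum_le_sum_of_subset_of_nonneg (fun j hj => ?_) fun j _ _ => ?_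
      · simp only [Finset.mem_Ico, Finset.mem_range] at hj ⊢
        omega
      · exact le_min zero_le_one (sub_nonneg.2 (hu j.le_succ))
    _ = _ := by simp only [u, mul_sub, Nat.cast_succ]

section Passage

variable {Ω : Type*} {X : ℝ → Ω → ℝ} {δ t : ℝ} {ω : Ω} {n : ℕ}

def passageSet (X : ℝ → Ω → ℝ) (δ : ℝ) (n : ℕ) (ω : Ω) : Set ℝ :=
  {u | passage X δ n ω ≤ u ∧ δ < X u ω - X (passage X δ n ω) ω}

theorem passage_succ (n : ℕ) : passage X δ (n + 1) ω = sInf (passageSet X δ n ω) := rfl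

theorem passage_add_of_passage_eq_zero {p : ℕ} (hp : passage X δ p ω = 0) (m : ℕ) :
    passage X δ (p + m) ω = passage X δ m ω := by
  induction m with
  | zero => exact hp
  | succ m ih => rw [← add_assoc, passage_succ, passage_succ, passageSet, passageSet, ih]

theorem passage_mul_of_passage_eq_zero {p : ℕ} (hp : passage X δ p ω = 0) (j : ℕ) :
    passage X δ (p * j) ω = 0 := by
  induction j with
  | zero => rfl
  | succ j ih => rw [Nat.mul_succ, add_comm, passage_add_of_passage_eq_zero hp, ih]

/-- If some `passageSet` is empty, the passage times return to `0` periodically (`sInf ∅ = 0`),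
so infinitely many of them are `≤ t`. -/
theorem passageSet_nonempty (hbdd : BddAbove {k | passage X δ k ω ≤ t}) (ht : 0 ≤ t) (n : ℕ) :
    (passageSet X δ n ω).Nonempty := by
  by_contra hempty
  have hzero : passage X δ (n + 1) ω = 0 := by
    rw [passage_succ, Set.not_nonempty_iff_eq_empty.1 hempty, Real.sInf_empty]
  obtain ⟨b, hb⟩ := hbdd
  have : (n + 1) * (b + 1) ≤ b := hb (by
    simp only [Set.mem_ofPred_eq, passage_mul_of_passage_eq_zero hzero, ht])
  nlinarith

theorem passage_le_passage_succ (hne : (passageSet X δ n ω).Nonempty) :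
    passage X δ n ω ≤ passage X δ (n + 1) ω :=
  le_csInf hne fun _ hu => hu.1

theorem passage_lt_passage_succ (hrc : ∀ s, ContinuousWithinAt (fun u => X u ω) (Ici s) s)
    (hδ : 0 < δ) (hne : (passageSet X δ n ω).Nonempty) :
    passage X δ n ω < passage X δ (n + 1) ω := by
  set T := passage X δ n ω
  have hnear : {u | X u ω < X T ω + δ} ∈ 𝓝[≥] T :=
    hrc T (Iio_mem_nhds (lt_add_of_pos_right _ hδ))
  obtain ⟨b, hTb, hIco⟩ := (mem_nhdsGE_iff_exists_Ico_subset' (lt_add_one T)).1 hnear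
  refine hTb.trans_le (le_csInf hne fun u hu => not_lt.1 fun hub => ?_)
  have : X u ω < X T ω + δ := hIco ⟨hu.1, hub⟩
  linarith [hu.2]

theorem add_le_passage_succ (hmono : Monotone fun u => X u ω)
    (hrc : ∀ s, ContinuousWithinAt (fun u => X u ω) (Ici s) s)
    (hne : (passageSet X δ n ω).Nonempty) :
    X (passage X δ n ω) ω + δ ≤ X (passage X δ (n + 1) ω) ω := by
  set T' := passage X δ (n + 1) ω
  have hafter : ∀ s ∈ Ioi T', X (passage X δ n ω) ω + δ ≤ X s ω := by
    intro s hs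
    obtain ⟨u, hu, hus⟩ := exists_lt_of_csInf_lt hne (passage_succ n ▸ hs : sInf _ < s)
    linarith [hu.2, hmono hus.le]
  exact ge_of_tendsto ((hrc T').mono Ioi_subset_Ici_self).tendsto
    (eventually_nhdsWithin_of_forall hafter)

theorem bddAbove_of_coverN_ne_zero (h : coverN X t δ ω ≠ 0) :
    BddAbove {k | passage X δ k ω ≤ t} := by
  by_contra hbdd
  exact h (Nat.sSup_of_not_bddAbove hbdd)

theorem passage_coverN_le (hbdd : BddAbove {k | passage X δ k ω ≤ t}) (ht : 0 ≤ t) :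
    passage X δ (coverN X t δ ω) ω ≤ t :=
  Nat.sSup_mem ⟨0, ht⟩ hbdd

end Passage

/-- The truncated variation of `X` along the grid `h ℕ`, in units of `l⁻¹`. -/
noncomputable def truncGridSum {Ω : Type*} (X : ℝ → Ω → ℝ) (l h : ℝ) (n : ℕ) (ω : Ω) : ℝ≥0∞ :=
  ∑ j ∈ Finset.range n, ENNReal.ofReal (min 1 (l * (X (↑(j + 1) * h) ω - X (↑j * h) ω)))

theorem coverN_le_one_add_two_mul_truncGridSum {Ω : Type*} {X : ℝ → Ω → ℝ} {ω : Ω}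
    (hmono : Monotone fun u => X u ω)
    (hrc : ∀ s, ContinuousWithinAt (fun u => X u ω) (Ici s) s) {t δ : ℝ} (ht : 0 < t)
    (hδ : 0 < δ) :
    ∀ᶠ n : ℕ in atTop, (coverN X t δ ω : ℝ≥0∞) ≤ 1 + 2 * truncGridSum X δ⁻¹ (t / n) n ω := by
  set k := coverN X t δ ω
  rcases eq_or_ne k 0 with hk | hk
  · exact .of_forall fun n => by simp [hk]
  have hbdd := bddAbove_of_coverN_ne_zero hk
  have hne := passageSet_nonempty hbdd ht.le
  have hT : Monotone fun i => passage X δ i ω :=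
    monotone_nat_of_le_succ fun i => passage_le_passage_succ (hne i)
  have hfine : ∀ᶠ n : ℕ in atTop, 0 < n ∧
      ∀ i ∈ Finset.range k, t / n < passage X δ (i + 1) ω - passage X δ i ω := by
    refine (eventually_gt_atTop 0).and ((Finset.range k).eventually_all.2 fun i _ => ?_)
    exact (tendsto_const_div_atTop_nhds_zero_nat t).eventually_lt_const
      (sub_pos.2 (passage_lt_passage_succ hrc hδ (hne i)))
  filter_upwards [hfine] with n ⟨hn, hgap⟩
  have hhalf := half_le_sum_min_one_grid hmono hT le_rfl hδ (by positivity)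
    (fun i hi => hgap i (Finset.mem_range.2 hi)) (fun i _ => add_le_passage_succ hmono hrc (hne i))
    (by rw [mul_div_cancel₀ t (by positivity)]; exact passage_coverN_le hbdd ht.le)
  have hsum : ENNReal.ofReal ((k / 2 : ℕ) : ℝ) ≤ truncGridSum X δ⁻¹ (t / n) n ω := by
    rw [truncGridSum, ← ENNReal.ofReal_sum_of_nonneg fun j _ =>
      le_min zero_le_one (mul_nonneg (inv_nonneg.2 hδ.le) (sub_nonneg.2 (hmono (by gcongr; simp))))]
    exact ENNReal.ofReal_le_ofReal hhalf
  rw [ENNReal.ofReal_natCast] at hsum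
  calc (k : ℝ≥0∞) ≤ ((1 + 2 * (k / 2) : ℕ) : ℝ≥0∞) := by gcongr; omega
    _ ≤ 1 + 2 * truncGridSum X δ⁻¹ (t / n) n ω := by push_cast; gcongr

section Moments

theorem natCast_mul_ofReal_div_le {x : ℝ} (hx : 0 ≤ x) (n : ℕ) :
    (n : ℝ≥0∞) * ENNReal.ofReal (x / n) ≤ ENNReal.ofReal x := by
  rw [← ENNReal.ofReal_natCast, ← ENNReal.ofReal_mul n.cast_nonneg]
  refine ENNReal.ofReal_le_ofReal ?_
  rcases n.eq_zero_or_pos with rfl | hn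
  · simpa using hx
  · rw [mul_div_cancel₀ x (by positivity)]

variable {Ω : Type*} [MeasurableSpace Ω] {P : Measure Ω}

theorem lintegral_sum_sq_le_of_indepFun {Y : ℕ → Ω → ℝ≥0∞} (hY : ∀ j, Measurable (Y j))
    (hindep : Pairwise fun i j => IndepFun (Y i) (Y j) P) {b c : ℝ≥0∞}
    (hle : ∀ j ω, Y j ω ≤ c) (hmean : ∀ j, ∫⁻ ω, Y j ω ∂P ≤ b) (n : ℕ) :
    ∫⁻ ω, (∑ j ∈ Finset.range n, Y j ω) ^ 2 ∂P ≤ (n * b) ^ 2 + c * (n * b) := by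
  have hpair : ∀ i j, ∫⁻ ω, Y i ω * Y j ω ∂P ≤ b ^ 2 + if i = j then c * b else 0 := by
    intro i j
    rcases eq_or_ne i j with rfl | hij
    · calc ∫⁻ ω, Y i ω * Y i ω ∂P ≤ ∫⁻ ω, c * Y i ω ∂P :=
            lintegral_mono fun ω => mul_le_mul_left (hle i ω) _
        _ = c * ∫⁻ ω, Y i ω ∂P := lintegral_const_mul c (hY i)
        _ ≤ b ^ 2 + if i = i then c * b else 0 := by
            rw [if_pos rfl]; exact le_add_left (mul_le_mul_right (hmean i) c)
    · calc ∫⁻ ω, Y i ω * Y j ω ∂P = (∫⁻ ω, Y i ω ∂P) * ∫⁻ ω, Y j ω ∂P :=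
            lintegral_mul_eq_lintegral_mul_lintegral_of_indepFun (hY i) (hY j) (hindep hij)
        _ ≤ b ^ 2 + if i = j then c * b else 0 := by
            rw [if_neg hij, add_zero, sq]
            exact mul_le_mul' (hmean i) (hmean j)
  calc ∫⁻ ω, (∑ j ∈ Finset.range n, Y j ω) ^ 2 ∂P
      = ∑ i ∈ Finset.range n, ∑ j ∈ Finset.range n, ∫⁻ ω, Y i ω * Y j ω ∂P := by
        simp_rw [sq, Finset.sum_mul_sum]
        refine (lintegral_finsetSum _ fun i _ => ?_).trans
          (Finset.sum_congr rfl fun i _ => lintegral_finsetSum _ fun j _ => ?_)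
        · exact Finset.measurable_sum _ fun j _ => (hY i).mul (hY j)
        · exact (hY i).mul (hY j)
    _ ≤ ∑ i ∈ Finset.range n, ∑ j ∈ Finset.range n, (b ^ 2 + if i = j then c * b else 0) :=
        Finset.sum_le_sum fun i _ => Finset.sum_le_sum fun j _ => hpair i j
    _ = (n * b) ^ 2 + c * (n * b) := by
        simp only [Finset.sum_add_distrib, Finset.sum_ite_eq, Finset.mem_range, Finset.sum_const,
          Finset.card_range, nsmul_eq_mul]
        rw [Finset.sum_ite_of_true fun i hi => Finset.mem_range.1 hi, Finset.sum_const,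
          Finset.card_range, nsmul_eq_mul]
        ring

theorem integral_sq_le_of_lintegral_le {f : Ω → ℝ} {B : ℝ} (hB : 0 ≤ B)
    (h : ∫⁻ ω, ‖f ω‖ₑ ^ 2 ∂P ≤ ENNReal.ofReal B) : ∫ ω, f ω ^ 2 ∂P ≤ B := by
  by_cases hint : Integrable (fun ω => f ω ^ 2) P
  · rw [integral_eq_lintegral_of_nonneg_ae (.of_forall fun ω => sq_nonneg (f ω))
      hint.aestronglyMeasurable]
    refine ENNReal.toReal_le_of_le_ofReal hB (le_of_eq_of_le (lintegral_congr fun ω => ?_) h)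
    rw [Real.enorm_eq_ofReal_abs, ← ENNReal.ofReal_pow (abs_nonneg _), sq_abs]
  · rw [integral_undef hint]
    exact hB

variable [IsProbabilityMeasure P] {Z : Ω → ℝ}

theorem integrable_exp_neg_mul (hZm : Measurable Z) (hZ : ∀ ω, 0 ≤ Z ω) {l : ℝ} (hl : 0 ≤ l) :
    Integrable (fun ω => exp (-l * Z ω)) P := by
  refine .of_bound (hZm.const_mul (-l)).exp.aestronglyMeasurable 1 (.of_forall fun ω => ?_)
  rw [norm_of_nonneg (exp_nonneg _), exp_le_one_iff, neg_mul, neg_nonpos]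
  exact mul_nonneg hl (hZ ω)

theorem lintegral_min_one_le (hZm : Measurable Z) (hZ : ∀ ω, 0 ≤ Z ω) :
    ∫⁻ ω, ENNReal.ofReal (min 1 (Z ω)) ∂P ≤ ENNReal.ofReal (2 * (1 - ∫ ω, exp (-Z ω) ∂P)) := by
  have hint : Integrable (fun ω => exp (-Z ω)) P := by
    simpa only [neg_one_mul] using integrable_exp_neg_mul hZm hZ zero_le_one
  have hint' : Integrable (fun ω => 2 * (1 - exp (-Z ω))) P :=
    ((integrable_const 1).sub hint).const_mul 2
  calc ∫⁻ ω, ENNReal.ofReal (min 1 (Z ω)) ∂P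
      ≤ ∫⁻ ω, ENNReal.ofReal (2 * (1 - exp (-Z ω))) ∂P :=
        lintegral_mono fun ω =>
          ENNReal.ofReal_le_ofReal (min_one_le_two_mul_one_sub_exp_neg (hZ ω))
    _ = ENNReal.ofReal (2 * (1 - ∫ ω, exp (-Z ω) ∂P)) := by
        rw [← ofReal_integral_eq_lintegral_ofReal hint' (.of_forall fun ω => ?_),
          integral_const_mul, integral_sub (integrable_const 1) hint, integral_const,
          probReal_univ, one_smul]
        have : exp (-Z ω) ≤ 1 := exp_le_one_iff.2 (neg_nonpos.2 (hZ ω))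
        simp only [Pi.zero_apply]
        linarith

theorem measure_le_le_exp_one_mul_integral (hZm : Measurable Z) (hZ : ∀ ω, 0 ≤ Z ω) {δ : ℝ}
    (hδ : 0 < δ) : (P {ω | Z ω ≤ δ}).toReal ≤ exp 1 * ∫ ω, exp (-δ⁻¹ * Z ω) ∂P := by
  set S := {ω | Z ω ≤ δ}
  have hS : MeasurableSet S := hZm measurableSet_Iic
  have hle : ∀ ω, S.indicator 1 ω ≤ exp 1 * exp (-δ⁻¹ * Z ω) := by
    intro ω
    by_cases hω : ω ∈ S
    · rw [indicator_of_mem hω, Pi.one_apply, ← exp_add, one_le_exp_iff, neg_mul,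
        ← sub_eq_add_neg, sub_nonneg, inv_mul_le_one₀ hδ]
      exact hω
    · rw [indicator_of_notMem hω]
      positivity
  rw [← measureReal_def, ← integral_indicator_one hS, ← integral_const_mul]
  exact integral_mono ((integrable_const 1).indicator hS)
    ((integrable_exp_neg_mul hZm hZ (inv_nonneg.2 hδ.le)).const_mul _) hle

theorem integral_exp_neg_mul_le (hZm : Measurable Z) (hZ : ∀ ω, 0 ≤ Z ω) {δ : ℝ}
    (hδ : 0 < δ) : ∫ ω, exp (-δ⁻¹ * Z ω) ∂P ≤ exp (-1) + (P {ω | Z ω ≤ δ}).toReal := by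
  set S := {ω | Z ω ≤ δ}
  have hS : MeasurableSet S := hZm measurableSet_Iic
  have hind : Integrable (S.indicator (1 : Ω → ℝ)) P := (integrable_const 1).indicator hS
  have hle : ∀ ω, exp (-δ⁻¹ * Z ω) ≤ exp (-1) + S.indicator 1 ω := by
    intro ω
    by_cases hω : ω ∈ S
    · rw [indicator_of_mem hω, Pi.one_apply]
      have : exp (-δ⁻¹ * Z ω) ≤ 1 := by
        rw [exp_le_one_iff, neg_mul, neg_nonpos]
        exact mul_nonneg (inv_nonneg.2 hδ.le) (hZ ω)
      linarith [exp_pos (-1)]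
    · rw [indicator_of_notMem hω, add_zero, exp_le_exp, neg_mul, neg_le_neg_iff,
        le_inv_mul_iff₀ hδ, mul_one]
      exact (not_le.1 hω).le
  calc ∫ ω, exp (-δ⁻¹ * Z ω) ∂P ≤ ∫ ω, (exp (-1) + S.indicator 1 ω) ∂P :=
        integral_mono (integrable_exp_neg_mul hZm hZ (inv_nonneg.2 hδ.le))
          ((integrable_const _).add hind) hle
    _ = exp (-1) + (P S).toReal := by
        rw [integral_add (integrable_const _) hind, integral_const, probReal_univ, one_smul,
          integral_indicator_one hS, measureReal_def]

theorem variance_le_of_lintegral_le {f : Ω → ℝ} {B : ℝ} (hB : 0 ≤ B)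
    (h : ∫⁻ ω, ‖f ω‖ₑ ^ 2 ∂P ≤ ENNReal.ofReal B) : variance f P ≤ B := by
  by_cases hm : AEStronglyMeasurable f P
  · exact (variance_le_expectation_sq hm).trans (integral_sq_le_of_lintegral_le hB h)
  · have hmean : ∫ ω, f ω ∂P = 0 := integral_undef fun hint => hm hint.aestronglyMeasurable
    refine ENNReal.toReal_le_of_le_ofReal hB ?_
    simpa only [evariance, hmean, sub_zero] using h

end Moments

/-- Normalized so that `IsSubordinator.laplace` reads `E[e^{-l X_t}] = e^{-t Φ(l)}`. -/
noncomputable def laplaceExponent (d : ℝ) (ν : Measure ℝ) (l : ℝ) : ℝ :=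
  d * l + ∫ y in Ioi 0, (1 - exp (-l * y)) ∂ν

theorem potU_nonneg {Ω : Type*} [MeasurableSpace Ω] (P : Measure Ω) (X : ℝ → Ω → ℝ) (δ : ℝ) :
    0 ≤ potU P X δ :=
  integral_nonneg fun _ => ENNReal.toReal_nonneg

namespace IsSubordinator

variable {Ω : Type*} [MeasurableSpace Ω] {P : Measure Ω} {X : ℝ → Ω → ℝ} {d : ℝ} {ν : Measure ℝ}
  {l t δ : ℝ}

theorem sub_nonneg_of_le (hs : IsSubordinator P X d ν) {a b : ℝ} (hab : a ≤ b) (ω : Ω) :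
    0 ≤ X b ω - X a ω :=
  sub_nonneg.2 (hs.mono ω hab)

theorem nonneg (hs : IsSubordinator P X d ν) {s : ℝ} (hs0 : 0 ≤ s) (ω : Ω) : 0 ≤ X s ω := by
  simpa [hs.start ω] using hs.sub_nonneg_of_le hs0 ω

theorem integral_exp_neg_mul (hs : IsSubordinator P X d ν) (hl : 0 < l) {s : ℝ}
    (hs0 : 0 ≤ s) : ∫ ω, exp (-l * X s ω) ∂P = exp (-s * laplaceExponent d ν l) :=
  hs.laplace l hl s hs0

theorem integral_exp_neg_mul_sub (hs : IsSubordinator P X d ν) (hl : 0 < l) {a b : ℝ}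
    (ha : 0 ≤ a) (hab : a ≤ b) :
    ∫ ω, exp (-l * (X b ω - X a ω)) ∂P = exp (-(b - a) * laplaceExponent d ν l) := by
  have hincr := hs.stat_incr a (b - a) ha (sub_nonneg.2 hab)
  rw [add_sub_cancel] at hincr
  rw [← hs.integral_exp_neg_mul hl (sub_nonneg.2 hab)]
  exact (hincr.comp (measurable_const_mul (-l)).exp).integral_eq

theorem laplaceExponent_nonneg (hs : IsSubordinator P X d ν) (hl : 0 < l) :
    0 ≤ laplaceExponent d ν l := by
  have := hs.isProb
  have hle : ∫ ω, exp (-l * X 1 ω) ∂P ≤ 1 := by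
    refine (integral_mono (integrable_exp_neg_mul (hs.meas 1) (fun ω => hs.nonneg zero_le_one ω)
      hl.le) (integrable_const 1) fun ω => ?_).trans_eq (by simp)
    rw [exp_le_one_iff, neg_mul, neg_nonpos]
    exact mul_nonneg hl.le (hs.nonneg zero_le_one ω)
  rw [hs.integral_exp_neg_mul hl zero_le_one, exp_le_one_iff] at hle
  linarith

theorem lintegral_min_one_mul_sub_le (hs : IsSubordinator P X d ν) (hl : 0 < l)
    {a b : ℝ} (ha : 0 ≤ a) (hab : a ≤ b) :
    ∫⁻ ω, ENNReal.ofReal (min 1 (l * (X b ω - X a ω))) ∂P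
      ≤ ENNReal.ofReal (2 * ((b - a) * laplaceExponent d ν l)) := by
  have := hs.isProb
  have hZ := fun ω => mul_nonneg hl.le (hs.sub_nonneg_of_le hab ω)
  refine (lintegral_min_one_le (Z := fun ω => l * (X b ω - X a ω))
    (((hs.meas b).sub (hs.meas a)).const_mul l) hZ).trans
    (ENNReal.ofReal_le_ofReal ?_)
  simp_rw [← neg_mul]
  rw [hs.integral_exp_neg_mul_sub hl ha hab]
  linarith [add_one_le_exp (-(b - a) * laplaceExponent d ν l)]

theorem iIndepFun_grid (hs : IsSubordinator P X d ν) {h : ℝ} (hh : 0 ≤ h) :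
    iIndepFun (fun (j : ℕ) ω => X (↑(j + 1) * h) ω - X (↑j * h) ω) P :=
  hs.indep_incr (fun j : ℕ => j * h) (fun _ _ hij => by dsimp only; gcongr) (by simp)

theorem measure_le_le_exp (hs : IsSubordinator P X d ν) (hδ : 0 < δ) {s : ℝ} (hs0 : 0 ≤ s) :
    (P {ω | X s ω ≤ δ}).toReal ≤ exp 1 * exp (-s * laplaceExponent d ν δ⁻¹) := by
  have := hs.isProb
  rw [← hs.integral_exp_neg_mul (inv_pos.2 hδ) hs0]
  exact measure_le_le_exp_one_mul_integral (hs.meas s) (fun ω => hs.nonneg hs0 ω) hδ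

theorem exp_sub_le_measure_le (hs : IsSubordinator P X d ν) (hδ : 0 < δ) {s : ℝ} (hs0 : 0 ≤ s) :
    exp (-s * laplaceExponent d ν δ⁻¹) - exp (-1) ≤ (P {ω | X s ω ≤ δ}).toReal := by
  have := hs.isProb
  rw [← hs.integral_exp_neg_mul (inv_pos.2 hδ) hs0, sub_le_iff_le_add']
  exact integral_exp_neg_mul_le (hs.meas s) (fun ω => hs.nonneg hs0 ω) hδ

theorem integrableOn_measure_le (hs : IsSubordinator P X d ν) (hδ : 0 < δ)
    (hΦ : 0 < laplaceExponent d ν δ⁻¹) :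
    IntegrableOn (fun s => (P {ω | X s ω ≤ δ}).toReal) (Ioi 0) := by
  have := hs.isProb
  have hanti : Antitone fun s => (P {ω | X s ω ≤ δ}).toReal := fun s s' hss' =>
    ENNReal.toReal_mono (measure_ne_top P _)
      (measure_mono fun ω (hω : X s' ω ≤ δ) => (hs.mono ω hss').trans hω)
  refine ((exp_neg_integrableOn_Ioi 0 hΦ).const_mul (exp 1)).mono'
    hanti.measurable.aestronglyMeasurable ((ae_restrict_iff' measurableSet_Ioi).2 (.of_forall ?_))
  intro s hs0
  rw [norm_of_nonneg ENNReal.toReal_nonneg]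
  exact (hs.measure_le_le_exp hδ (le_of_lt hs0)).trans_eq (by ring_nf)

theorem potU_le (hs : IsSubordinator P X d ν) (hδ : 0 < δ) (hΦ : 0 < laplaceExponent d ν δ⁻¹) :
    potU P X δ ≤ exp 1 / laplaceExponent d ν δ⁻¹ := by
  calc potU P X δ ≤ ∫ s in Ioi 0, exp 1 * exp (-laplaceExponent d ν δ⁻¹ * s) :=
        setIntegral_mono_on (hs.integrableOn_measure_le hδ hΦ)
          ((exp_neg_integrableOn_Ioi 0 hΦ).const_mul _) measurableSet_Ioi fun s hs0 =>
            (hs.measure_le_le_exp hδ (le_of_lt hs0)).trans_eq (by ring_nf)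
    _ = exp 1 / laplaceExponent d ν δ⁻¹ := by
        rw [integral_const_mul, integral_exp_mul_Ioi (neg_lt_zero.2 hΦ), mul_zero, exp_zero,
          div_neg, neg_div, neg_neg, mul_one_div]

/-- For `s ≤ (2Φ)⁻¹` the Laplace transform forces `P(X_s ≤ δ) ≥ e^{-1/2} - e^{-1}`. -/
theorem potU_pos (hs : IsSubordinator P X d ν) (hδ : 0 < δ) (hΦ : 0 < laplaceExponent d ν δ⁻¹) :
    0 < potU P X δ := by
  set Φ := laplaceExponent d ν δ⁻¹
  set s₀ := (2 * Φ)⁻¹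
  have hs₀ : 0 < s₀ := by positivity
  have hc : 0 < exp (-(1 / 2)) - exp (-1) := sub_pos.2 (exp_lt_exp.2 (by norm_num))
  have hlow : ∀ s ∈ Ioc 0 s₀, exp (-(1 / 2)) - exp (-1) ≤ (P {ω | X s ω ≤ δ}).toReal := by
    rintro s ⟨hs0, hss₀⟩
    refine le_trans ?_ (hs.exp_sub_le_measure_le hδ hs0.le)
    have : s * Φ ≤ 1 / 2 := by
      calc s * Φ ≤ s₀ * Φ := by gcongr
        _ = 1 / 2 := by simp only [s₀]; field_simp
    gcongr
    linarith
  calc 0 < s₀ * (exp (-(1 / 2)) - exp (-1)) := mul_pos hs₀ hc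
    _ = ∫ s in Ioc 0 s₀, (exp (-(1 / 2)) - exp (-1)) := by
        rw [setIntegral_const, Real.volume_real_Ioc_of_le hs₀.le, sub_zero, smul_eq_mul]
    _ ≤ ∫ s in Ioc 0 s₀, (P {ω | X s ω ≤ δ}).toReal :=
        setIntegral_mono_on (integrableOn_const (by simp))
          ((hs.integrableOn_measure_le hδ hΦ).mono_set Ioc_subset_Ioi_self) measurableSet_Ioc hlow
    _ ≤ potU P X δ :=
        setIntegral_mono_set (hs.integrableOn_measure_le hδ hΦ)
          (.of_forall fun _ => ENNReal.toReal_nonneg) Ioc_subset_Ioi_self.eventuallyLE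

theorem laplaceExponent_le_exp_one_div_potU (hs : IsSubordinator P X d ν) (hδ : 0 < δ) :
    laplaceExponent d ν δ⁻¹ ≤ exp 1 / potU P X δ := by
  rcases (hs.laplaceExponent_nonneg (inv_pos.2 hδ)).eq_or_lt with hΦ | hΦ
  · rw [← hΦ]
    exact div_nonneg (exp_pos 1).le (potU_nonneg P X δ)
  · rw [le_div_iff₀ (hs.potU_pos hδ hΦ), mul_comm, ← le_div_iff₀ hΦ]
    exact hs.potU_le hδ hΦ

theorem measurable_min_one_grid (hs : IsSubordinator P X d ν) (l h : ℝ) (j : ℕ) :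
    Measurable fun ω => ENNReal.ofReal (min 1 (l * (X (↑(j + 1) * h) ω - X (↑j * h) ω))) := by
  have := hs.meas
  fun_prop

theorem lintegral_min_one_grid_le (hs : IsSubordinator P X d ν) (hl : 0 < l) (ht : 0 ≤ t)
    (n j : ℕ) :
    ∫⁻ ω, ENNReal.ofReal (min 1 (l * (X (↑(j + 1) * (t / n)) ω - X (↑j * (t / n)) ω))) ∂P
      ≤ ENNReal.ofReal (2 * (t * laplaceExponent d ν l) / n) := by
  have hh : 0 ≤ t / n := by positivity
  convert hs.lintegral_min_one_mul_sub_le hl (by positivity)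
    (mul_le_mul_of_nonneg_right (Nat.cast_le.2 j.le_succ) hh) using 2
  push_cast
  ring

theorem lintegral_truncGridSum_le (hs : IsSubordinator P X d ν) (hl : 0 < l) (ht : 0 ≤ t)
    (n : ℕ) :
    ∫⁻ ω, truncGridSum X l (t / n) n ω ∂P ≤ ENNReal.ofReal (2 * (t * laplaceExponent d ν l)) := by
  have hΦ := hs.laplaceExponent_nonneg hl
  calc ∫⁻ ω, truncGridSum X l (t / n) n ω ∂P
      = ∑ j ∈ Finset.range n, ∫⁻ ω,
          ENNReal.ofReal (min 1 (l * (X (↑(j + 1) * (t / n)) ω - X (↑j * (t / n)) ω))) ∂P :=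
        lintegral_finsetSum _ fun j _ => hs.measurable_min_one_grid l (t / n) j
    _ ≤ ∑ j ∈ Finset.range n, ENNReal.ofReal (2 * (t * laplaceExponent d ν l) / n) :=
        Finset.sum_le_sum fun j _ => hs.lintegral_min_one_grid_le hl ht n j
    _ ≤ _ := by
        rw [Finset.sum_const, Finset.card_range, nsmul_eq_mul]
        exact natCast_mul_ofReal_div_le (by positivity) n

theorem lintegral_truncGridSum_sq_le (hs : IsSubordinator P X d ν) (hl : 0 < l) (ht : 0 ≤ t)
    (n : ℕ) :
    ∫⁻ ω, truncGridSum X l (t / n) n ω ^ 2 ∂P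
      ≤ ENNReal.ofReal (2 * (t * laplaceExponent d ν l)) ^ 2
        + ENNReal.ofReal (2 * (t * laplaceExponent d ν l)) := by
  have hΦ := hs.laplaceExponent_nonneg hl
  have hindep := (hs.iIndepFun_grid (h := t / n) (by positivity)).comp
    (fun _ x => ENNReal.ofReal (min 1 (l * x))) fun _ => by fun_prop
  have hmean := natCast_mul_ofReal_div_le (x := 2 * (t * laplaceExponent d ν l)) (by positivity) n
  calc ∫⁻ ω, truncGridSum X l (t / n) n ω ^ 2 ∂P
      ≤ (n * ENNReal.ofReal (2 * (t * laplaceExponent d ν l) / n)) ^ 2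
        + 1 * (n * ENNReal.ofReal (2 * (t * laplaceExponent d ν l) / n)) :=
        lintegral_sum_sq_le_of_indepFun (hs.measurable_min_one_grid l (t / n))
          (fun i j hij => hindep.indepFun hij)
          (fun j ω => ENNReal.ofReal_le_one.2 (min_le_left _ _))
          (hs.lintegral_min_one_grid_le hl ht n) n
    _ ≤ _ := by rw [one_mul]; gcongr

theorem lintegral_coverN_sq_le (hs : IsSubordinator P X d ν) (ht : 0 < t) (hδ : 0 < δ) :
    ∫⁻ ω, (coverN X t δ ω : ℝ≥0∞) ^ 2 ∂P
      ≤ 1 + 8 * ENNReal.ofReal (2 * (t * laplaceExponent d ν δ⁻¹))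
        + 4 * ENNReal.ofReal (2 * (t * laplaceExponent d ν δ⁻¹)) ^ 2 := by
  have := hs.isProb
  set a := ENNReal.ofReal (2 * (t * laplaceExponent d ν δ⁻¹))
  set W : ℕ → Ω → ℝ≥0∞ := fun n => truncGridSum X δ⁻¹ (t / n) n
  have hW : ∀ n, Measurable (W n) := fun n =>
    Finset.measurable_sum _ fun j _ => hs.measurable_min_one_grid δ⁻¹ (t / n) j
  have hbound : ∀ n, ∫⁻ ω, (1 + 2 * W n ω) ^ 2 ∂P ≤ 1 + 8 * a + 4 * a ^ 2 := by
    intro n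
    have hexpand : ∀ ω, (1 + 2 * W n ω) ^ 2 = 1 + (4 * W n ω + 4 * W n ω ^ 2) := fun ω => by ring
    simp_rw [hexpand]
    rw [lintegral_add_left measurable_const, lintegral_const, measure_univ, mul_one,
      lintegral_add_left ((hW n).const_mul 4), lintegral_const_mul _ (hW n),
      lintegral_const_mul _ ((hW n).pow_const 2)]
    calc 1 + (4 * ∫⁻ ω, W n ω ∂P + 4 * ∫⁻ ω, W n ω ^ 2 ∂P) ≤ 1 + (4 * a + 4 * (a ^ 2 + a)) := by
          gcongr
          · exact hs.lintegral_truncGridSum_le (inv_pos.2 hδ) ht.le n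
          · exact hs.lintegral_truncGridSum_sq_le (inv_pos.2 hδ) ht.le n
      _ = 1 + 8 * a + 4 * a ^ 2 := by ring
  calc ∫⁻ ω, (coverN X t δ ω : ℝ≥0∞) ^ 2 ∂P
      ≤ ∫⁻ ω, liminf (fun n => (1 + 2 * W n ω) ^ 2) atTop ∂P :=
        lintegral_mono fun ω => le_liminf_of_le (by isBoundedDefault)
          ((coverN_le_one_add_two_mul_truncGridSum (hs.mono ω) (hs.rightCont ω) ht hδ).mono
            fun n hn => by gcongr)
    _ ≤ liminf (fun n => ∫⁻ ω, (1 + 2 * W n ω) ^ 2 ∂P) atTop :=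
        lintegral_liminf_le fun n => by fun_prop
    _ ≤ 1 + 8 * a + 4 * a ^ 2 := liminf_le_of_frequently_le' (.of_forall hbound)

theorem lintegral_coverN_sq_le_potU (hs : IsSubordinator P X d ν) (ht : 0 < t) (hδ : 0 < δ) :
    ∫⁻ ω, ‖(coverN X t δ ω : ℝ)‖ₑ ^ 2 ∂P ≤ ENNReal.ofReal (288 * t ^ 2 / potU P X δ ^ 2 + 5) := by
  have hΦ0 := hs.laplaceExponent_nonneg (inv_pos.2 hδ)
  have hA0 : 0 ≤ 2 * (t * laplaceExponent d ν δ⁻¹) := by positivity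
  have hAU : 2 * (t * laplaceExponent d ν δ⁻¹) ≤ 6 * t / potU P X δ := by
    have := potU_nonneg P X δ
    calc 2 * (t * laplaceExponent d ν δ⁻¹) ≤ 2 * (t * (exp 1 / potU P X δ)) := by
          gcongr; exact hs.laplaceExponent_le_exp_one_div_potU hδ
      _ ≤ 2 * (t * (3 / potU P X δ)) := by gcongr; linarith [exp_one_lt_d9]
      _ = 6 * t / potU P X δ := by ring
  have hmoment := hs.lintegral_coverN_sq_le ht hδ
  generalize 2 * (t * laplaceExponent d ν δ⁻¹) = A at hA0 hAU hmoment
  generalize potU P X δ = U at hAU ⊢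
  have hA2 : A ^ 2 ≤ 36 * (t ^ 2 / U ^ 2) := (pow_le_pow_left₀ hA0 hAU 2).trans_eq (by ring)
  simp only [enorm_natCast]
  calc ∫⁻ ω, (coverN X t δ ω : ℝ≥0∞) ^ 2 ∂P
      ≤ 1 + 8 * ENNReal.ofReal A + 4 * ENNReal.ofReal A ^ 2 := hmoment
    _ = ENNReal.ofReal (1 + 8 * A + 4 * A ^ 2) := by
        rw [ENNReal.ofReal_add (by positivity) (by positivity), ENNReal.ofReal_add zero_le_one
          (by positivity), ENNReal.ofReal_one, ENNReal.ofReal_mul (by norm_num),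
          ENNReal.ofReal_mul (by norm_num), ENNReal.ofReal_pow hA0]
        norm_num
    -- `1 + 8 A + 4 A² ≤ 5 + 8 A²` and `A² ≤ 36 t² / U²`
    _ ≤ ENNReal.ofReal (288 * t ^ 2 / U ^ 2 + 5) := by
        refine ENNReal.ofReal_le_ofReal ?_
        rw [mul_div_assoc]
        nlinarith [sq_nonneg (A - 1)]

end IsSubordinator

/-- there are absolute constants `M, K`, not depending on the
subordinator, with `E[N(t,δ)²] ≤ M t²/U(δ)² + K`, and in particular
`Var(N(t,δ)) ≤ M t²/U(δ)² + K`, for all `t, δ > 0`. -/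
theorem coverN_second_moment_bound :
    ∃ M K : ℝ,
      ∀ (Ω : Type) (_ : MeasurableSpace Ω) (P : Measure Ω)
        (X : ℝ → Ω → ℝ) (d : ℝ) (ν : Measure ℝ),
        IsSubordinator P X d ν →
        ∀ t δ : ℝ, 0 < t → 0 < δ →
          (∫ ω, ((coverN X t δ ω : ℝ)) ^ 2 ∂P
              ≤ M * t ^ 2 / (potU P X δ) ^ 2 + K) ∧
          (variance (fun ω => ((coverN X t δ ω : ℝ))) P
              ≤ M * t ^ 2 / (potU P X δ) ^ 2 + K) := by
  refine ⟨288, 5, fun Ω _ P X d ν hs t δ ht hδ => ?_⟩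
  have := hs.isProb
  have hB : 0 ≤ 288 * t ^ 2 / potU P X δ ^ 2 + 5 := by positivity
  have hmoment := hs.lintegral_coverN_sq_le_potU ht hδ
  exact ⟨integral_sq_le_of_lintegral_le hB hmoment, variance_le_of_lintegral_le hB hmoment⟩
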